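/- Suppose Eve's channel is a BEC, coset coding with parity check matrix A is used, and the all-zero codeword is transmitted. Let J_e be the set of erased positions, and let w = rank of the submatrix [a_j : j ∈ J_e]. Then the conditional distribution of S^m given Z^n = z^n is uniform on the F_2-linear span of {a_j : j ∈ J_e}, a subspace of dimension w; i.e., P(S^m = s | Z^n = z^n) = 2^{-w} if s lies in the span and 0 otherwise. -/

import Mathlib

open Finset

/-- The parity check matrix `A = [I_m | A_2]`. -/
def pcheck {m k : ℕ} (A2 : Matrix (Fin m) (Fin k) (ZMod 2)) :
    Matrix (Fin m) (Fin m ⊕ Fin k) (ZMod 2) :=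
  Matrix.of fun j => Sum.elim (fun j' => if j = j' then 1 else 0) (fun i => A2 j i)

/-- BEC(ε) transition probabilities: `none` is the erasure symbol. -/
def becW (ε : ℝ) : Option (ZMod 2) → ZMod 2 → ℝ
  | none, _ => ε
  | some b, x => if b = x then 1 - ε else 0

/-- Joint pmf of `S^m` and Eve's BEC observation `Z^n` under coset coding. -/
noncomputable def pSZbec {m k : ℕ} (ε : ℝ) (A2 : Matrix (Fin m) (Fin k) (ZMod 2))
    (s : Fin m → ZMod 2) (z : (Fin m ⊕ Fin k) → Option (ZMod 2)) : ℝ :=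
  ∑ x : (Fin m ⊕ Fin k) → ZMod 2,
    (1 / 2 ^ (m + k) : ℝ) * (if (pcheck A2).mulVec x = s then 1 else 0) *
      ∏ i, becW ε (z i) (x i)

/-- Conditional pmf of `S^m` given `Z^n = z^n`. -/
noncomputable def pcond {m k : ℕ} (ε : ℝ) (A2 : Matrix (Fin m) (Fin k) (ZMod 2))
    (z : (Fin m ⊕ Fin k) → Option (ZMod 2)) (s : Fin m → ZMod 2) : ℝ :=
  pSZbec ε A2 s z / ∑ s', pSZbec ε A2 s' z

/-- Lemma 2: if the all-zero codeword is sent through a BEC and `J_e` is the set of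
erased positions, then the conditional distribution of `S^m` given `Z^n = z^n`
(where `z_j = e` for `j ∈ J_e` and `z_j = 0` otherwise) is uniform on the
`F_2`-linear span of the columns `{a_j : j ∈ J_e}` of `A`, a subspace of dimension
`w = rank [a_j : j ∈ J_e]`:  `P(S^m = s | z^n) = 2^{-w}` for `s` in the span, `0`
otherwise. -/
theorem stmt10 {m k : ℕ} (ε : ℝ) (hε0 : 0 < ε) (hε1 : ε < 1)
    (A2 : Matrix (Fin m) (Fin k) (ZMod 2)) (Je : Finset (Fin m ⊕ Fin k)) :
    ∀ s : Fin m → ZMod 2,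
      (s ∈ Submodule.span (ZMod 2)
            ((fun i => fun j => pcheck A2 j i) '' (Je : Set (Fin m ⊕ Fin k))) →
        pcond ε A2 (fun i => if i ∈ Je then none else some 0) s
          = 1 / 2 ^ (Module.finrank (ZMod 2)
              (Submodule.span (ZMod 2)
                ((fun i => fun j => pcheck A2 j i) '' (Je : Set (Fin m ⊕ Fin k)))))) ∧
      (s ∉ Submodule.span (ZMod 2)
            ((fun i => fun j => pcheck A2 j i) '' (Je : Set (Fin m ⊕ Fin k))) →
        pcond ε A2 (fun i => if i ∈ Je then none else some 0) s = 0) := by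
  classical
  set col : (Fin m ⊕ Fin k) → (Fin m → ZMod 2) := fun i => fun j => pcheck A2 j i with hcol
  set z : (Fin m ⊕ Fin k) → Option (ZMod 2) := fun i => if i ∈ Je then none else some 0 with hz
  set f : ({i // i ∈ Je} → ZMod 2) →ₗ[ZMod 2] (Fin m → ZMod 2) :=
    Fintype.linearCombination (ZMod 2) (fun i : Je => col ↑i) with hf
  have hrange : LinearMap.range f = Submodule.span (ZMod 2) (col '' (Je : Set (Fin m ⊕ Fin k))) := by
    rw [hf, Fintype.range_linearCombination]
    congr 1
    ext y
    simp [Set.range_comp]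
  set e : ({i // i ∈ Je} → ZMod 2) → ((Fin m ⊕ Fin k) → ZMod 2) :=
    fun c i => if h : i ∈ Je then c ⟨i, h⟩ else 0 with he
  have hmul : ∀ c, (pcheck A2).mulVec (e c) = f c := by
    intro c
    funext j
    rw [hf]
    rw [Fintype.linearCombination_apply]
    simp only [Matrix.mulVec, dotProduct]
    have h0 : ∀ i ∈ (Finset.univ : Finset (Fin m ⊕ Fin k)), i ∉ Je →
        pcheck A2 j i * e c i = 0 := by
      intro i _ hi
      simp [he, hi]
    rw [← Finset.sum_subset (Finset.subset_univ Je) h0]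
    rw [← Finset.sum_attach Je (fun i => pcheck A2 j i * e c i)]
    rw [Finset.sum_apply]
    rw [Finset.univ_eq_attach]
    apply Finset.sum_congr rfl
    intro i _
    simp [he, i.2, hcol, mul_comm]
  have hprodE : ∀ c, ∏ i, becW ε (z i) (e c i) = ∏ i, (if i ∈ Je then ε else 1 - ε) := by
    intro c
    apply Finset.prod_congr rfl
    intro i _
    by_cases hi : i ∈ Je <;> simp [hz, he, hi, becW]
  have hvanish : ∀ x : (Fin m ⊕ Fin k) → ZMod 2, (∃ i, i ∉ Je ∧ x i ≠ 0) →
      ∏ i, becW ε (z i) (x i) = 0 := by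
    rintro x ⟨i, hi, hxi⟩
    apply Finset.prod_eq_zero (Finset.mem_univ i)
    simp [hz, hi, becW, Ne.symm hxi]
  have hinj : Function.Injective e := by
    intro c1 c2 h
    funext i
    have := congrFun h ↑i
    simpa [he, i.2] using this
  set S0 : Finset ((Fin m ⊕ Fin k) → ZMod 2) :=
    Finset.univ.filter (fun x => ∀ i, i ∉ Je → x i = 0) with hS0
  have himg : S0 = Finset.image e Finset.univ := by
    ext x
    simp only [hS0, Finset.mem_filter, Finset.mem_univ, true_and, Finset.mem_image]
    constructor
    · intro h
      refine ⟨fun i => x ↑i, ?_⟩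
      funext i
      by_cases hi : i ∈ Je
      · simp [he, hi]
      · simp [he, hi, h i hi]
    · rintro ⟨c, -, rfl⟩ i hi
      simp [he, hi]
  set C : ℝ := (1 / 2 ^ (m + k) : ℝ) * ∏ i, (if i ∈ Je then ε else 1 - ε) with hC
  have hCpos : 0 < C := by
    apply mul_pos (by positivity)
    apply Finset.prod_pos
    intro i _
    split <;> linarith
  have key : ∀ t, pSZbec ε A2 t z =
      C * ∑ c : {i // i ∈ Je} → ZMod 2, (if f c = t then (1 : ℝ) else 0) := by
    intro t
    unfold pSZbec
    have hzero : ∀ x ∈ (Finset.univ : Finset ((Fin m ⊕ Fin k) → ZMod 2)), x ∉ S0 →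
        (1 / 2 ^ (m + k) : ℝ) * (if (pcheck A2).mulVec x = t then 1 else 0) *
          ∏ i, becW ε (z i) (x i) = 0 := by
      intro x _ hx
      have : ∃ i, i ∉ Je ∧ x i ≠ 0 := by
        by_contra hcon
        push_neg at hcon
        exact hx (Finset.mem_filter.mpr ⟨Finset.mem_univ x, hcon⟩)
      rw [hvanish x this, mul_zero]
    rw [← Finset.sum_subset (Finset.subset_univ S0) hzero]
    rw [himg, Finset.sum_image (fun a _ b _ h => hinj h)]
    rw [Finset.mul_sum]
    apply Finset.sum_congr rfl
    intro c _
    rw [hmul c, hprodE c, hC]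
    ring
  have hsum1 : ∀ c : {i // i ∈ Je} → ZMod 2,
      ∑ s' : Fin m → ZMod 2, (if f c = s' then (1 : ℝ) else 0) = 1 := by
    intro c
    rw [Finset.sum_ite_eq Finset.univ (f c) (fun _ => (1 : ℝ))]
    simp
  have hden : ∑ s', pSZbec ε A2 s' z = C * (Fintype.card ({i // i ∈ Je} → ZMod 2) : ℝ) := by
    simp only [key]
    rw [← Finset.mul_sum]
    congr 1
    rw [Finset.sum_comm]
    simp [hsum1]
  intro s
  constructor
  · intro hs
    have hsr : s ∈ LinearMap.range f := by rw [hrange]; exact hs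
    obtain ⟨c0, hc0⟩ := hsr
    -- numerator count
    have hnum : ∑ c : {i // i ∈ Je} → ZMod 2, (if f c = s then (1 : ℝ) else 0)
        = (Fintype.card (LinearMap.ker f) : ℝ) := by
      have hb : Function.Bijective (fun c : {i // i ∈ Je} → ZMod 2 => c + c0) :=
        (Equiv.addRight c0).bijective
      rw [← Fintype.sum_bijective _ hb
        (fun c => if f c = 0 then (1 : ℝ) else 0)
        (fun c => if f c = s then (1 : ℝ) else 0)
        (fun c => by
          have : f (c + c0) = f c + s := by rw [map_add, hc0]
          simp only [this]
          congr 1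
          simp [add_eq_right])]
      rw [Finset.sum_boole]
      norm_cast
      rw [Fintype.card_subtype]
      apply Finset.card_nbij (fun c => c) (fun c hc => by simpa [LinearMap.mem_ker] using hc)
      · exact fun a _ b _ h => h
      · intro c hc
        exact ⟨c, by simpa [LinearMap.mem_ker] using hc, rfl⟩
    have hK : (Fintype.card (LinearMap.ker f) : ℕ)
        = 2 ^ Module.finrank (ZMod 2) (LinearMap.ker f) := by
      rw [Module.card_eq_pow_finrank (K := ZMod 2), ZMod.card]
    have hR : (Fintype.card (LinearMap.range f) : ℕ)
        = 2 ^ Module.finrank (ZMod 2) (LinearMap.range f) := by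
      rw [Module.card_eq_pow_finrank (K := ZMod 2), ZMod.card]
    have hD : (Fintype.card ({i // i ∈ Je} → ZMod 2) : ℕ)
        = Fintype.card (LinearMap.ker f) * Fintype.card (LinearMap.range f) := by
      rw [Module.card_eq_pow_finrank (K := ZMod 2) (V := {i // i ∈ Je} → ZMod 2), ZMod.card, hK, hR,
        ← pow_add]
      congr 1
      rw [add_comm]
      exact (LinearMap.finrank_range_add_finrank_ker f).symm ▸ rfl
    unfold pcond
    rw [key s, hden, hnum, hD]
    have hKpos : (0 : ℝ) < (Fintype.card (LinearMap.ker f) : ℝ) := by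
      exact_mod_cast Fintype.card_pos
    have hRpos : (0 : ℝ) < (Fintype.card (LinearMap.range f) : ℝ) := by
      exact_mod_cast Fintype.card_pos
    rw [← hrange]
    have h2 : ((2 : ℝ)) ^ Module.finrank (ZMod 2) (LinearMap.range f)
        = (Fintype.card (LinearMap.range f) : ℝ) := by
      rw [hR]; push_cast; ring
    rw [h2]
    have hC0 : C ≠ 0 := hCpos.ne'
    have hK0 : (Fintype.card (LinearMap.ker f) : ℝ) ≠ 0 := hKpos.ne'
    have hR0 : (Fintype.card (LinearMap.range f) : ℝ) ≠ 0 := hRpos.ne'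
    push_cast
    rw [← mul_assoc, div_mul_cancel_left₀ (mul_ne_zero hC0 hK0), one_div]
  · intro hs
    unfold pcond
    rw [key s]
    have : ∑ c : {i // i ∈ Je} → ZMod 2, (if f c = s then (1 : ℝ) else 0) = 0 := by
      apply Finset.sum_eq_zero
      intro c _
      rw [if_neg]
      intro hcs
      exact hs (hrange ▸ hcs ▸ LinearMap.mem_range_self f c)
    rw [this, mul_zero, zero_div]
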